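/- arXiv:1305.3429 — 3 statements merged into one kernel-verified Lean document; each statement's English description precedes it below -/
import Mathlib

section
/- For all integers n ≥ 1 and d ≥ 1, the space Hom(ℤ^{2d}, SL(n,ℂ))⁺/SL(n,ℂ) of conjugation classes of 2d-tuples of commuting semisimple elements of SL(n,ℂ) is path connected. -/
open Matrix

/-- The space `Hom(ℤ^m, G)` of commuting `m`-tuples with entries in a subset `G`
of a monoid `M`, as a subset of `M^m` (with the subspace topology). -/
def commTuples {M : Type*} [Monoid M] (m : ℕ) (G : Set M) : Set (Fin m → M) :=
  {f | (∀ i, f i ∈ G) ∧ ∀ i j, f i * f j = f j * f i}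

/-- Simultaneous conjugation, by elements of `G` (together with their inverses in `G`),
of tuples lying in a subset `S` of `M^m`. -/
def conjRel {M : Type*} [Monoid M] {m : ℕ} (G : Set M) (S : Set (Fin m → M)) :
    S → S → Prop := fun x y =>
  ∃ g gi : M, g ∈ G ∧ gi ∈ G ∧ g * gi = 1 ∧ gi * g = 1 ∧
    ∀ i, g * (x : Fin m → M) i * gi = (y : Fin m → M) i

/-- The conjugation orbit space `S/G`, with the quotient topology. -/
abbrev RepSpace {M : Type*} [Monoid M] [TopologicalSpace M] {m : ℕ} (G : Set M)
    (S : Set (Fin m → M)) : Type _ := Quot (conjRel G S)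

/-- `A` is a strong deformation retract of `X`. -/
def IsStrongDeformationRetract {X : Type*} [TopologicalSpace X] (A : Set X) : Prop :=
  ∃ H : X × unitInterval → X, Continuous H ∧
    (∀ x, H (x, 0) = x) ∧ (∀ x, H (x, 1) ∈ A) ∧ (∀ a ∈ A, ∀ t, H (a, t) = a)

/-- A complex square matrix is semisimple if it is diagonalizable over `ℂ`. -/
def IsSemisimpleMat {n : ℕ} (A : Matrix (Fin n) (Fin n) ℂ) : Prop :=
  ∃ P Pi : Matrix (Fin n) (Fin n) ℂ, P * Pi = 1 ∧ Pi * P = 1 ∧ (Pi * A * P).IsDiag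

/-- The subspace `Hom(ℤ^m, G)⁺` of commuting `m`-tuples in `G` all of whose entries
are semisimple. -/
def ssTuples (m : ℕ) {n : ℕ} (G : Set (Matrix (Fin n) (Fin n) ℂ)) :
    Set (Fin m → Matrix (Fin n) (Fin n) ℂ) :=
  {f | f ∈ commTuples m G ∧ ∀ i, IsSemisimpleMat (f i)}

/-- `GL(n,ℂ)` as the set of invertible complex `n × n` matrices. -/
def GLset (n : ℕ) : Set (Matrix (Fin n) (Fin n) ℂ) := {A | IsUnit A}

/-- `U(n)` as a set of complex `n × n` matrices. -/
def Uset (n : ℕ) : Set (Matrix (Fin n) (Fin n) ℂ) := Matrix.unitaryGroup (Fin n) ℂ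

/-- `SL(n,ℂ)` as the set of complex `n × n` matrices of determinant one. -/
def SLset (n : ℕ) : Set (Matrix (Fin n) (Fin n) ℂ) := {A | A.det = 1}

/-- `SU(n)` as a set of complex `n × n` matrices. -/
def SUset (n : ℕ) : Set (Matrix (Fin n) (Fin n) ℂ) :=
  {A | A ∈ Matrix.unitaryGroup (Fin n) ℂ ∧ A.det = 1}

/-!
Commuting semisimple matrices have a common eigenbasis, so a commuting semisimple tuple in
`SL(n,ℂ)` is conjugate to a tuple of diagonal matrices; rescaling the change of basis by an
`n`-th root of its determinant makes the conjugation happen inside `SL(n,ℂ)`. Hence every orbit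
meets the set of diagonal tuples, which is a product of tori `{v | ∏ v = 1}`. Each torus is the
image under `exp` of the complex hyperplane `{c | ∑ c = 0}`, hence path connected, and so is
the orbit space, a continuous image of their product.
-/

open Polynomial in
theorem Matrix.isSemisimple_toLin'_diagonal {ι K : Type*} [Fintype ι] [DecidableEq ι] [Field K]
    (v : ι → K) : Module.End.IsSemisimple (toLin' (diagonal v)) := by
  classical
  let p : K[X] := ∏ μ ∈ Finset.univ.image v, (X - C μ)
  have hp : Squarefree p :=
    (separable_prod_X_sub_C_iff'.mpr fun _ _ _ _ h => h).squarefree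
  have hv : aeval v p = 0 := by
    funext j
    simp only [aeval_fn_apply, Pi.zero_apply, p, map_prod]
    exact Finset.prod_eq_zero (Finset.mem_image_of_mem v (Finset.mem_univ j)) (by simp)
  refine Module.End.isSemisimple_of_squarefree_aeval_eq_zero hp ?_
  change aeval (toLinAlgEquiv' (diagonalAlgHom K v)) p = 0
  rw [aeval_algHom_apply, aeval_algHom_apply, hv, map_zero, map_zero]

theorem IsSemisimpleMat.isSemisimple_toLin' {n : ℕ} {A : Matrix (Fin n) (Fin n) ℂ}
    (hA : IsSemisimpleMat A) : Module.End.IsSemisimple (toLin' A) := by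
  obtain ⟨P, Pi, hPPi, hPiP, hdiag⟩ := hA
  refine (LinearEquiv.isSemisimple_iff _ _ (toLin'OfInv hPiP hPPi) ?_).mp
    (isSemisimple_toLin'_diagonal (Pi * A * P).diag)
  rw [hdiag.diagonal_diag]
  change toLin' P ∘ₗ toLin' (Pi * A * P) = toLin' A ∘ₗ toLin' P
  rw [← toLin'_mul, ← toLin'_mul, ← Matrix.mul_assoc, ← Matrix.mul_assoc, hPPi,
    Matrix.one_mul]

theorem Module.End.top_le_span_common_eigenvectors {ι K V : Type*} [Field K] [IsAlgClosed K]
    [AddCommGroup V] [Module K V] [FiniteDimensional K V] (T : ι → Module.End K V)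
    (hcomm : Pairwise fun i j => Commute (T i) (T j)) (hT : ∀ i, (T i).IsSemisimple) :
    ⊤ ≤ Submodule.span K {v | ∀ i, ∃ μ : K, T i v = μ • v} := by
  rw [← iSup_iInf_maxGenEigenspace_eq_top_of_iSup_maxGenEigenspace_eq_top_of_commute T hcomm
    fun i => iSup_maxGenEigenspace_eq_top (T i)]
  refine iSup_le fun χ v hv => Submodule.subset_span fun i => ⟨χ i, ?_⟩
  have hvi := (Submodule.mem_iInf _).mp hv i
  rw [(hT i).isFinitelySemisimple.maxGenEigenspace_eq_eigenspace] at hvi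
  exact mem_eigenspace_iff.mp hvi

theorem LinearMap.isDiag_toMatrix {ι K V : Type*} [Fintype ι] [DecidableEq ι] [Field K]
    [AddCommGroup V] [Module K V] (b : Module.Basis ι K V) (f : Module.End K V)
    (hf : ∀ j, ∃ μ : K, f (b j) = μ • b j) : (toMatrix b b f).IsDiag := by
  intro i j hij
  obtain ⟨μ, hμ⟩ := hf j
  simp [toMatrix_apply, hμ, Finsupp.single_eq_of_ne hij]

namespace Matrix

variable {ι n K : Type*} [Fintype n] [DecidableEq n] [Field K] [IsAlgClosed K]

theorem exists_isDiag_conj_of_commute (f : ι → Matrix n n K)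
    (hcomm : Pairwise fun i j => Commute (f i) (f j))
    (hf : ∀ i, Module.End.IsSemisimple (toLin' (f i))) :
    ∃ P : (Matrix n n K)ˣ, ∀ i, ((↑P⁻¹ : Matrix n n K) * f i * P).IsDiag := by
  have hspan := Module.End.top_le_span_common_eigenvectors (fun i => toLin' (f i))
    (fun i j hij => (hcomm hij).map toLinAlgEquiv') hf
  let b₀ := Module.Basis.ofSpan hspan
  let e := Pi.basisFun K n
  let b := b₀.reindex (b₀.indexEquiv e)
  have hb : ∀ j i, ∃ μ : K, toLin' (f i) (b j) = μ • b j := fun j => by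
    rw [Module.Basis.reindex_apply]
    exact Module.Basis.ofSpan_subset hspan (Set.mem_range_self _)
  refine ⟨⟨e.toMatrix b, b.toMatrix e, e.toMatrix_mul_toMatrix_flip b,
    b.toMatrix_mul_toMatrix_flip e⟩, fun i => ?_⟩
  have hconj := basis_toMatrix_mul_linearMap_toMatrix_mul_basis_toMatrix b e b e (toLin' (f i))
  rw [LinearMap.toMatrix_eq_toMatrix', LinearMap.toMatrix'_toLin'] at hconj
  simp only [Units.inv_mk, Units.val_mk, hconj]
  exact LinearMap.isDiag_toMatrix b _ fun j => hb j i

theorem exists_det_smul_eq_one (P : (Matrix n n K)ˣ) :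
    ∃ c : Kˣ, (↑(c • P) : Matrix n n K).det = 1 := by
  rcases isEmpty_or_nonempty n with _ | _
  · exact ⟨1, det_isEmpty⟩
  obtain ⟨z, hz⟩ := IsAlgClosed.exists_pow_nat_eq (P : Matrix n n K).det⁻¹
    (Fintype.card_pos (α := n))
  have hdet : (P : Matrix n n K).det ≠ 0 := (P.isUnit.map detMonoidHom).ne_zero
  have hz₀ : z ≠ 0 := by
    rintro rfl
    exact hdet (by simpa [zero_pow Fintype.card_ne_zero] using hz.symm)
  refine ⟨Units.mk0 z hz₀, ?_⟩
  rw [Units.val_smul, Units.smul_def, Units.val_mk0, det_smul, hz, inv_mul_cancel₀ hdet]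

theorem exists_det_eq_one_isDiag_conj_of_commute (f : ι → Matrix n n K)
    (hcomm : Pairwise fun i j => Commute (f i) (f j))
    (hf : ∀ i, Module.End.IsSemisimple (toLin' (f i))) :
    ∃ P : (Matrix n n K)ˣ, (P : Matrix n n K).det = 1 ∧
      ∀ i, ((↑P⁻¹ : Matrix n n K) * f i * P).IsDiag := by
  obtain ⟨P, hP⟩ := exists_isDiag_conj_of_commute f hcomm hf
  obtain ⟨c, hc⟩ := exists_det_smul_eq_one P
  refine ⟨c • P, hc, fun i => ?_⟩
  simpa [Units.smul_inv, Units.smul_def, smul_smul] using hP i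

end Matrix

theorem image_exp_setOf_sum_eq_zero (ι : Type*) [Fintype ι] [Nonempty ι] :
    (fun c : ι → ℂ => fun i => Complex.exp (c i)) '' {c | ∑ i, c i = 0} =
      {v | ∏ i, v i = 1} := by
  classical
  ext v
  refine ⟨?_, fun hv => ?_⟩
  · rintro ⟨c, hc, rfl⟩
    change ∏ i, Complex.exp (c i) = 1
    rw [← Complex.exp_sum, hc.out, Complex.exp_zero]
  have hv₀ : ∀ i, v i ≠ 0 := fun i hi => by
    simp [Finset.prod_eq_zero (Finset.mem_univ i) hi] at hv
  set s := ∑ i, Complex.log (v i)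
  have hs : Complex.exp s = 1 := by
    rw [Complex.exp_sum, ← hv.out]
    exact Finset.prod_congr rfl fun i _ => Complex.exp_log (hv₀ i)
  -- `s ∈ 2πiℤ`, so subtracting it at one index moves `log ∘ v` into the hyperplane
  -- without changing its exponential.
  obtain ⟨i₀⟩ := ‹Nonempty ι›
  refine ⟨fun i => Complex.log (v i) - Pi.single (M := fun _ => ℂ) i₀ s i, ?_,
    funext fun i => ?_⟩
  · simp [Finset.sum_sub_distrib, s]
  · rcases eq_or_ne i i₀ with rfl | hi
    · simp [Complex.exp_sub, hs, Complex.exp_log (hv₀ _)]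
    · simp [hi, Complex.exp_log (hv₀ _)]

theorem isPathConnected_setOf_prod_eq_one (ι : Type*) [Fintype ι] :
    IsPathConnected {v : ι → ℂ | ∏ i, v i = 1} := by
  rcases isEmpty_or_nonempty ι with _ | _
  · simpa using isPathConnected_univ
  rw [← image_exp_setOf_sum_eq_zero]
  let sum : (ι → ℂ) →ₗ[ℝ] ℂ := ∑ i, LinearMap.proj i
  convert (LinearMap.ker sum).isPathConnected.image
    (f := fun c : ι → ℂ => fun i => Complex.exp (c i)) (by fun_prop)
  ext c
  simp [sum]

theorem diagonal_mem_ssTuples {m n : ℕ} {w : Fin m → Fin n → ℂ}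
    (hw : ∀ k, ∏ j, w k j = 1) : (fun k => diagonal (w k)) ∈ ssTuples m (SLset n) :=
  ⟨⟨fun k => det_diagonal.trans (hw k),
    fun k l => by simp only [diagonal_mul_diagonal, mul_comm]⟩,
    fun k => ⟨1, 1, mul_one 1, mul_one 1, by simp⟩⟩

theorem exists_diagonal_conjRel {m n : ℕ} (x : ssTuples m (SLset n)) :
    ∃ (w : Fin m → Fin n → ℂ) (hw : ∀ k, ∏ j, w k j = 1),
      conjRel (SLset n) (ssTuples m (SLset n)) x ⟨_, diagonal_mem_ssTuples hw⟩ := by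
  obtain ⟨x, ⟨hdet, hcomm⟩, hss⟩ := x
  obtain ⟨P, hP, hdiag⟩ := exists_det_eq_one_isDiag_conj_of_commute x
    (fun k l _ => hcomm k l) fun k => (hss k).isSemisimple_toLin'
  refine ⟨fun k => ((↑P⁻¹ : Matrix (Fin n) (Fin n) ℂ) * x k * P).diag, fun k => ?_,
    ↑P⁻¹, P, by simp [SLset, hP], hP, P.inv_mul, P.mul_inv,
    fun k => (hdiag k).diagonal_diag.symm⟩
  rw [← det_diagonal, (hdiag k).diagonal_diag, det_units_conj', hdet k]

theorem specialLinear_char_variety_pathConnected_general (n d : ℕ) :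
    PathConnectedSpace (RepSpace (SLset n) (ssTuples (2*d) (SLset n))) := by
  let T := Set.univ.pi fun _ : Fin (2 * d) => {v : Fin n → ℂ | ∏ j, v j = 1}
  have : PathConnectedSpace T := isPathConnected_iff_pathConnectedSpace.mp
    (.pi fun _ => isPathConnected_setOf_prod_eq_one _)
  let φ : T → RepSpace (SLset n) (ssTuples (2*d) (SLset n)) := fun w =>
    Quot.mk _ ⟨_, diagonal_mem_ssTuples fun k => w.2 k (Set.mem_univ k)⟩
  refine Function.Surjective.pathConnectedSpace (f := φ) ?_ ?_
  · rintro ⟨x⟩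
    obtain ⟨w, hw, hx⟩ := exists_diagonal_conjRel x
    exact ⟨⟨w, fun k _ => hw k⟩, (Quot.sound hx).symm⟩
  · exact continuous_quot_mk.comp <| Continuous.subtype_mk
      (continuous_pi fun k => ((continuous_apply k).comp continuous_subtype_val).matrix_diagonal) _

/-- Corollary 4.8 of Biswas–Florentino for `G = SL(n,ℂ)`: the space of conjugation
classes of `2d`-tuples of commuting semisimple elements of `SL(n,ℂ)` is path
connected. -/
theorem specialLinear_char_variety_pathConnected (n d : ℕ) (hn : 1 ≤ n) (hd : 1 ≤ d) :
    PathConnectedSpace (RepSpace (SLset n) (ssTuples (2*d) (SLset n))) :=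
  specialLinear_char_variety_pathConnected_general n d
end

section
/- For all integers n ≥ 1 and d ≥ 1, with Sp(2n,ℂ) = {g ∈ GL(2n,ℂ) : gᵀ J g = J} for the standard skew-symmetric matrix J, the space Hom(ℤ^{2d}, Sp(2n,ℂ))⁺/Sp(2n,ℂ) of conjugation classes of 2d-tuples of commuting semisimple elements of Sp(2n,ℂ) is path connected. -/
open Matrix

/-- The standard skew-symmetric `2n × 2n` matrix `J` defining the symplectic form,
viewed as a matrix indexed by `Fin (2*n)`. -/
noncomputable def Jstd (n : ℕ) : Matrix (Fin (2*n)) (Fin (2*n)) ℂ :=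
  Matrix.reindex (finSumFinEquiv.trans (finCongr (two_mul n).symm))
    (finSumFinEquiv.trans (finCongr (two_mul n).symm)) (Matrix.J (Fin n) ℂ)

/-- `Sp(2n,ℂ) = {g ∈ GL(2n,ℂ) : gᵀ J g = J}` as a set of complex `2n × 2n` matrices. -/
def Spset (n : ℕ) : Set (Matrix (Fin (2*n)) (Fin (2*n)) ℂ) :=
  {A | IsUnit A ∧ Aᵀ * Jstd n * A = Jstd n}


/-!
A commuting tuple `F` of semisimple elements of `Sp(2n, ℂ)` splits `ℂ^{2n}` into joint
eigenspaces `V χ`, and invariance of the symplectic form `ω` gives `ω (V χ) (V ψ) = 0` unless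
`ψ = χ⁻¹`. Splitting off hyperbolic planes spanned by joint eigenvectors `e ∈ V χ`,
`f ∈ V χ⁻¹` produces a symplectic basis of joint eigenvectors, so `F` is `Sp`-conjugate to a
tuple in the diagonal torus `{diag(t, t⁻¹)}`. That torus is the image of `ℂ^n` under
`μ ↦ diag(exp μ, exp (-μ))`, so the orbit space is a continuous image of the path-connected
space `(ℂ^n)^{2d}`.
-/

namespace Module.End

variable {K E : Type*} [Field K] [AddCommGroup E] [Module K E] [FiniteDimensional K E]

theorem isSemisimple_of_iSup_eigenspace_eq_top {f : Module.End K E}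
    (h : ⨆ μ, f.eigenspace μ = ⊤) : f.IsSemisimple := by
  classical
  set s := f.finite_hasEigenvalue.toFinset
  refine isSemisimple_of_squarefree_aeval_eq_zero (p := ∏ μ ∈ s, (Polynomial.X - Polynomial.C μ))
    (Polynomial.separable_prod_X_sub_C_iff'.mpr fun _ _ _ _ => id).squarefree ?_
  rw [← LinearMap.ker_eq_top, eq_top_iff, ← h]
  refine iSup_le fun μ x hx => ?_
  rw [LinearMap.mem_ker, aeval_apply_of_mem_apply_eq_smul (mem_eigenspace_iff.mp hx)]
  rcases eq_or_ne x 0 with rfl | hx0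
  · exact smul_zero _
  · have hμ : μ ∈ s := (Set.Finite.mem_toFinset _).mpr (hasEigenvalue_of_hasEigenvector ⟨hx, hx0⟩)
    simp [Polynomial.eval_prod, Finset.prod_eq_zero hμ]

theorem iSup_iInf_eigenspace_eq_top_of_commute {ι : Type*} (f : ι → Module.End K E)
    (hcomm : Pairwise fun i j ↦ Commute (f i) (f j)) (h : ∀ i, ⨆ μ, (f i).eigenspace μ = ⊤) :
    ⨆ χ : ι → K, ⨅ i, (f i).eigenspace (χ i) = ⊤ := by
  have hss i := (isSemisimple_of_iSup_eigenspace_eq_top (h i)).isFinitelySemisimple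
  simpa only [(hss _).maxGenEigenspace_eq_eigenspace] using
    iSup_iInf_maxGenEigenspace_eq_top_of_iSup_maxGenEigenspace_eq_top_of_commute f hcomm
      fun i => by simpa only [(hss i).maxGenEigenspace_eq_eigenspace] using h i

end Module.End

theorem isSemisimpleMat_diagonal {N : ℕ} (v : Fin N → ℂ) : IsSemisimpleMat (diagonal v) :=
  ⟨1, 1, Matrix.mul_one 1, Matrix.mul_one 1, by simp⟩

theorem IsSemisimpleMat.iSup_eigenspace_eq_top {N : ℕ} {A : Matrix (Fin N) (Fin N) ℂ}
    (h : IsSemisimpleMat A) : ⨆ μ, Module.End.eigenspace A.mulVecLin μ = ⊤ := by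
  obtain ⟨P, Q, hPQ, hQP, hD⟩ := h
  have hAP : A * P = P * diagonal (Q * A * P).diag := by
    rw [hD.diagonal_diag, ← Matrix.mul_assoc, ← Matrix.mul_assoc, hPQ, Matrix.one_mul]
  have hcol j : Pᵀ j ∈ Module.End.eigenspace A.mulVecLin ((Q * A * P) j j) := by
    refine Module.End.mem_eigenspace_iff.mpr (funext fun i => ?_)
    have h := congrFun₂ hAP i j
    rw [mul_apply', mul_diagonal, diag_apply] at h
    exact h.trans (mul_comm _ _)
  refine eq_top_iff.mpr fun x _ => ?_
  have hx : x = ∑ j, (Q *ᵥ x) j • Pᵀ j := by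
    conv_lhs => rw [← one_mulVec x, ← hPQ, ← mulVec_mulVec, mulVec_eq_sum]
    simp only [op_smul_eq_smul]
  rw [hx]
  exact Submodule.sum_mem _ fun j _ =>
    Submodule.smul_mem _ _ (Submodule.mem_iSup_of_mem _ (hcol j))

namespace LinearMap.BilinForm

variable {K E : Type*} [Field K] [AddCommGroup E] [Module K E] {ω : LinearMap.BilinForm K E}

structure IsSymplecticSystem (ω : LinearMap.BilinForm K E) {r : ℕ} (e f : Fin r → E) : Prop where
  apply_e_e : ∀ a b, ω (e a) (e b) = 0
  apply_f_f : ∀ a b, ω (f a) (f b) = 0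
  apply_e_f : ∀ a b, ω (e a) (f b) = if a = b then 1 else 0

theorem isSymplecticSystem_elim0 : IsSymplecticSystem ω (Fin.elim0 : Fin 0 → E) Fin.elim0 :=
  ⟨nofun, nofun, nofun⟩

theorem IsSymplecticSystem.cons {r : ℕ} {e f : Fin r → E} {e₀ f₀ : E} (hω : ω.IsAlt)
    (h : IsSymplecticSystem ω e f) (h₀ : ω e₀ f₀ = 1)
    (he : ∀ a, ω e₀ (e a) = 0 ∧ ω f₀ (e a) = 0) (hf : ∀ a, ω e₀ (f a) = 0 ∧ ω f₀ (f a) = 0) :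
    IsSymplecticSystem ω (Fin.cons e₀ e) (Fin.cons f₀ f) := by
  have flip {x y : E} (hxy : ω x y = 0) : ω y x = 0 := by rw [← hω.neg_eq, hxy, neg_zero]
  refine ⟨fun a b => ?_, fun a b => ?_, fun a b => ?_⟩ <;>
    induction a using Fin.cases <;> induction b using Fin.cases <;>
    simp [hω.self_eq_zero, h₀, he, hf, flip (he _).1, flip (he _).2, flip (hf _).2,
      h.apply_e_e, h.apply_f_f, h.apply_e_f, (Fin.succ_ne_zero _).symm]

theorem IsSymplecticSystem.apply_sumElim {r : ℕ} {e f : Fin r → E} (hω : ω.IsAlt)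
    (h : IsSymplecticSystem ω e f) (u w : Fin r ⊕ Fin r) :
    ω (Sum.elim f e u) (Sum.elim f e w) = Matrix.J (Fin r) K u w := by
  rcases u with k | k <;> rcases w with l | l <;>
    simp [Matrix.J, one_apply, h.apply_e_e, h.apply_f_f, h.apply_e_f, ← hω.neg_eq, eq_comm]

theorem linearIndependent_of_apply_eq_of_det_ne_zero {ι : Type*} [Fintype ι] [DecidableEq ι]
    {c : ι → E} {M : Matrix ι ι K} (hc : ∀ u w, ω (c u) (c w) = M u w) (hM : M.det ≠ 0) :
    LinearIndependent K c := by
  refine Fintype.linearIndependent_iff.mpr fun g hg =>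
    congrFun (eq_zero_of_vecMul_eq_zero hM (funext fun w => ?_))
  simpa [vecMul, dotProduct, hc] using congrArg (fun x => ω x (c w)) hg

theorem IsSymplecticSystem.finrank_eq [FiniteDimensional K E] {r : ℕ} {e f : Fin r → E}
    (hω : ω.IsAlt) (h : IsSymplecticSystem ω e f)
    (hspan : ⊤ ≤ Submodule.span K (Set.range e ∪ Set.range f)) :
    Module.finrank K E = 2 * r := by
  have hli := linearIndependent_of_apply_eq_of_det_ne_zero (h.apply_sumElim hω)
    (isUnit_det_J (Fin r) K).ne_zero
  have hspan' : ⊤ ≤ Submodule.span K (Set.range (Sum.elim f e)) := by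
    rwa [Set.Sum.elim_range, Set.union_comm]
  rw [Module.finrank_eq_card_basis (Module.Basis.mk hli hspan'), Fintype.card_sum,
    Fintype.card_fin, two_mul]

section PlaneComplement

variable {e₀ f₀ x : E}

/-- When `ω e₀ f₀ = 1`, the `ω`-orthogonal projection onto the complement of the hyperbolic
plane spanned by `e₀` and `f₀`. -/
def planeComplProj (ω : LinearMap.BilinForm K E) (e₀ f₀ : E) : E →ₗ[K] E :=
  LinearMap.id - (ω e₀).smulRight f₀ + (ω f₀).smulRight e₀

theorem planeComplProj_apply : planeComplProj ω e₀ f₀ x = x - ω e₀ x • f₀ + ω f₀ x • e₀ := rfl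

def planeCompl (ω : LinearMap.BilinForm K E) (W : Submodule K E) (e₀ f₀ : E) : Submodule K E :=
  W ⊓ LinearMap.ker (ω e₀) ⊓ LinearMap.ker (ω f₀)

theorem mem_planeCompl {W : Submodule K E} :
    x ∈ planeCompl ω W e₀ f₀ ↔ x ∈ W ∧ ω e₀ x = 0 ∧ ω f₀ x = 0 := by
  simp [planeCompl, and_assoc]

theorem planeComplProj_mem_planeCompl (hω : ω.IsAlt) (h₀ : ω e₀ f₀ = 1) {W : Submodule K E}
    (he₀ : e₀ ∈ W) (hf₀ : f₀ ∈ W) (hx : x ∈ W) :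
    planeComplProj ω e₀ f₀ x ∈ planeCompl ω W e₀ f₀ := by
  have hf₀e₀ : ω f₀ e₀ = -1 := by rw [← hω.neg_eq, h₀]
  refine mem_planeCompl.mpr
    ⟨W.add_mem (W.sub_mem hx (W.smul_mem _ hf₀)) (W.smul_mem _ he₀), ?_, ?_⟩ <;>
    simp [planeComplProj_apply, h₀, hf₀e₀, hω.self_eq_zero]

theorem planeComplProj_eq_self (hx₁ : ω e₀ x = 0) (hx₂ : ω f₀ x = 0) :
    planeComplProj ω e₀ f₀ x = x := by
  simp [planeComplProj_apply, hx₁, hx₂]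

theorem apply_planeComplProj (hω : ω.IsAlt) (hx₁ : ω e₀ x = 0) (hx₂ : ω f₀ x = 0) (y : E) :
    ω x (planeComplProj ω e₀ f₀ y) = ω x y := by
  simp [planeComplProj_apply, ← hω.neg_eq e₀, ← hω.neg_eq f₀, hx₁, hx₂]

theorem exists_apply_ne_zero_of_mem_planeCompl (hω : ω.IsAlt) (h₀ : ω e₀ f₀ = 1)
    {W : Submodule K E} (he₀ : e₀ ∈ W) (hf₀ : f₀ ∈ W) (hnd : ∀ x ∈ W, x ≠ 0 → ∃ y ∈ W, ω x y ≠ 0) :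
    ∀ x ∈ planeCompl ω W e₀ f₀, x ≠ 0 → ∃ y ∈ planeCompl ω W e₀ f₀, ω x y ≠ 0 := by
  intro x hx hx0
  obtain ⟨hxW, hx₁, hx₂⟩ := mem_planeCompl.mp hx
  obtain ⟨y, hy, hxy⟩ := hnd x hxW hx0
  exact ⟨_, planeComplProj_mem_planeCompl hω h₀ he₀ hf₀ hy,
    by rwa [apply_planeComplProj hω hx₁ hx₂]⟩

theorem mem_of_planeComplProj_mem {S : Submodule K E} (he₀ : e₀ ∈ S) (hf₀ : f₀ ∈ S)
    (hx : planeComplProj ω e₀ f₀ x ∈ S) : x ∈ S := by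
  have hx' : x = planeComplProj ω e₀ f₀ x + ω e₀ x • f₀ - ω f₀ x • e₀ := by
    rw [planeComplProj_apply]; abel
  rw [hx']
  exact S.sub_mem (S.add_mem hx (S.smul_mem _ hf₀)) (S.smul_mem _ he₀)

theorem planeCompl_lt (hω : ω.IsAlt) (h₀ : ω e₀ f₀ = 1) {W : Submodule K E} (he₀ : e₀ ∈ W) :
    planeCompl ω W e₀ f₀ < W := by
  refine lt_of_le_of_ne (fun x hx => (mem_planeCompl.mp hx).1) fun h => ?_
  have := (mem_planeCompl.mp (h.ge he₀)).2.2
  rw [← hω.neg_eq, h₀] at this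
  exact one_ne_zero (neg_eq_zero.mp this)

end PlaneComplement

section Graded

variable {ι : Type*} {V : ι → Submodule K E} {σ : ι → ι}

def IsOrthoOffPairs (ω : LinearMap.BilinForm K E) (V : ι → Submodule K E) (σ : ι → ι) : Prop :=
  ∀ χ ψ, ψ ≠ σ χ → ∀ x ∈ V χ, ∀ y ∈ V ψ, ω x y = 0

theorem IsOrthoOffPairs.exists_pair (hV : IsOrthoOffPairs ω V σ) {W : Submodule K E}
    (hW : W ≤ ⨆ χ, W ⊓ V χ) (hnd : ∀ x ∈ W, x ≠ 0 → ∃ y ∈ W, ω x y ≠ 0) (hW0 : W ≠ ⊥) :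
    ∃ χ e₀ f₀, e₀ ∈ W ⊓ V χ ∧ f₀ ∈ W ⊓ V (σ χ) ∧ ω e₀ f₀ = 1 := by
  obtain ⟨χ, hχ⟩ : ∃ χ, W ⊓ V χ ≠ ⊥ := by
    by_contra! h
    exact hW0 (eq_bot_iff.mpr (hW.trans (by simp [h])))
  obtain ⟨e₀, he₀, he₀0⟩ := Submodule.exists_mem_ne_zero_of_ne_bot hχ
  obtain ⟨y, hyW, hy⟩ := hnd e₀ he₀.1 he₀0
  -- `ω e₀` kills every `V ψ` with `ψ ≠ σ χ`, so it cannot also kill `W ⊓ V (σ χ)`.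
  obtain ⟨w, hw, hw0⟩ : ∃ w ∈ W ⊓ V (σ χ), ω e₀ w ≠ 0 := by
    by_contra! h
    refine hy (LinearMap.mem_ker.mp (hW.trans (iSup_le fun ψ z hz => ?_) hyW))
    rcases eq_or_ne ψ (σ χ) with rfl | hψ
    · exact h z hz
    · exact hV χ ψ hψ e₀ he₀.2 z hz.2
  exact ⟨χ, e₀, (ω e₀ w)⁻¹ • w, he₀, (W ⊓ V (σ χ)).smul_mem _ hw, by simp [hw0]⟩

theorem IsOrthoOffPairs.planeComplProj_mem (hV : IsOrthoOffPairs ω V σ) (hσ : Function.Involutive σ)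
    {χ ψ : ι} {e₀ f₀ y : E} (he₀ : e₀ ∈ V χ) (hf₀ : f₀ ∈ V (σ χ)) (hy : y ∈ V ψ) :
    planeComplProj ω e₀ f₀ y ∈ V ψ := by
  have smul_mem {χ' : ι} {z w : E} (hz : z ∈ V χ') (hw : w ∈ V (σ χ')) : ω z y • w ∈ V ψ := by
    by_cases h : ψ = σ χ'
    · exact h ▸ (V _).smul_mem _ hw
    · rw [hV χ' ψ h z hz y hy, zero_smul]
      exact (V ψ).zero_mem
  exact (V ψ).add_mem ((V ψ).sub_mem hy (smul_mem he₀ hf₀)) (smul_mem hf₀ ((hσ χ).symm ▸ he₀))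

theorem IsOrthoOffPairs.planeCompl_le_iSup (hV : IsOrthoOffPairs ω V σ)
    (hσ : Function.Involutive σ) (hω : ω.IsAlt) {W : Submodule K E} (hW : W ≤ ⨆ χ, W ⊓ V χ)
    {χ : ι} {e₀ f₀ : E} (he₀ : e₀ ∈ W ⊓ V χ) (hf₀ : f₀ ∈ W ⊓ V (σ χ)) (h₀ : ω e₀ f₀ = 1) :
    planeCompl ω W e₀ f₀ ≤ ⨆ ψ, planeCompl ω W e₀ f₀ ⊓ V ψ := by
  intro x hx
  obtain ⟨hxW, hx₁, hx₂⟩ := mem_planeCompl.mp hx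
  rw [← planeComplProj_eq_self hx₁ hx₂]
  have := Submodule.mem_map_of_mem (f := planeComplProj ω e₀ f₀) (hW hxW)
  rw [Submodule.map_iSup] at this
  refine iSup_mono (fun ψ => Submodule.map_le_iff_le_comap.mpr fun y hy =>
    Submodule.mem_comap.mpr (Submodule.mem_inf.mpr ⟨?_, ?_⟩)) this
  · exact planeComplProj_mem_planeCompl hω h₀ he₀.1 hf₀.1 hy.1
  · exact hV.planeComplProj_mem hσ he₀.2 hf₀.2 hy.2

theorem IsOrthoOffPairs.exists_isSymplecticSystem [FiniteDimensional K E] (hω : ω.IsAlt)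
    (hσ : Function.Involutive σ) (hV : IsOrthoOffPairs ω V σ) (W : Submodule K E)
    (hW : W ≤ ⨆ χ, W ⊓ V χ) (hnd : ∀ x ∈ W, x ≠ 0 → ∃ y ∈ W, ω x y ≠ 0) :
    ∃ (r : ℕ) (e f : Fin r → E), IsSymplecticSystem ω e f ∧ (∀ a, ∃ χ, e a ∈ W ⊓ V χ) ∧
      (∀ a, ∃ χ, f a ∈ W ⊓ V χ) ∧ W ≤ Submodule.span K (Set.range e ∪ Set.range f) := by
  induction W using WellFoundedLT.induction with
  | _ W ih =>
  rcases eq_or_ne W ⊥ with rfl | hW0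
  · exact ⟨0, Fin.elim0, Fin.elim0, isSymplecticSystem_elim0, nofun, nofun, bot_le⟩
  obtain ⟨χ, e₀, f₀, he₀, hf₀, h₀⟩ := hV.exists_pair hW hnd hW0
  set U := planeCompl ω W e₀ f₀
  obtain ⟨r, e, f, hsys, he, hf, hspan⟩ := ih U (planeCompl_lt hω h₀ he₀.1)
    (hV.planeCompl_le_iSup hσ hω hW he₀ hf₀ h₀)
    (exists_apply_ne_zero_of_mem_planeCompl hω h₀ he₀.1 hf₀.1 hnd)
  have hU {v : E} (hv : ∃ ψ, v ∈ U ⊓ V ψ) : (ω e₀ v = 0 ∧ ω f₀ v = 0) ∧ ∃ ψ, v ∈ W ⊓ V ψ := by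
    obtain ⟨ψ, hvU, hvV⟩ := hv
    exact ⟨(mem_planeCompl.mp hvU).2, ψ, (mem_planeCompl.mp hvU).1, hvV⟩
  refine ⟨r + 1, Fin.cons e₀ e, Fin.cons f₀ f,
    hsys.cons hω h₀ (fun a => (hU (he a)).1) (fun a => (hU (hf a)).1),
    Fin.cases ⟨χ, he₀⟩ fun a => (hU (he a)).2, Fin.cases ⟨σ χ, hf₀⟩ fun a => (hU (hf a)).2,
    fun x hx => mem_of_planeComplProj_mem (ω := ω) (Submodule.subset_span (Or.inl ⟨0, rfl⟩))
      (Submodule.subset_span (Or.inr ⟨0, rfl⟩)) ?_⟩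
  refine Submodule.span_mono (Set.union_subset_union ?_ ?_)
    (hspan (planeComplProj_mem_planeCompl hω h₀ he₀.1 hf₀.1 hx)) <;>
  exact fun _ ⟨a, ha⟩ => ⟨a.succ, ha⟩

end Graded

end LinearMap.BilinForm

section Symplectic

variable {n : ℕ}

noncomputable abbrev finSumFinEquivTwoMul (n : ℕ) : Fin n ⊕ Fin n ≃ Fin (2 * n) :=
  finSumFinEquiv.trans (finCongr (two_mul n).symm)

theorem Jstd_apply (a b : Fin (2 * n)) :
    Jstd n a b =
      J (Fin n) ℂ ((finSumFinEquivTwoMul n).symm a) ((finSumFinEquivTwoMul n).symm b) :=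
  rfl

theorem Jstd_transpose : (Jstd n)ᵀ = -Jstd n := by
  ext a b
  simpa [Jstd_apply] using congrFun₂ (J_transpose (Fin n) ℂ)
    ((finSumFinEquivTwoMul n).symm a) ((finSumFinEquivTwoMul n).symm b)

theorem det_Jstd_ne_zero : (Jstd n).det ≠ 0 := by
  rw [Jstd, det_reindex_self]
  exact (isUnit_det_J (Fin n) ℂ).ne_zero

theorem mem_Spset_of_transpose_mul_mul {A : Matrix (Fin (2 * n)) (Fin (2 * n)) ℂ}
    (h : Aᵀ * Jstd n * A = Jstd n) : A ∈ Spset n := by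
  refine ⟨(isUnit_iff_isUnit_det A).mpr (isUnit_iff_ne_zero.mpr fun hA => ?_), h⟩
  exact det_Jstd_ne_zero (n := n) (by rw [← h, det_mul, det_mul, hA, mul_zero])

theorem Spset.mul_mem {A B : Matrix (Fin (2 * n)) (Fin (2 * n)) ℂ} (hA : A ∈ Spset n)
    (hB : B ∈ Spset n) : A * B ∈ Spset n :=
  ⟨hA.1.mul hB.1, by
    rw [transpose_mul, show Bᵀ * Aᵀ * Jstd n * (A * B) = Bᵀ * (Aᵀ * Jstd n * A) * B by
      simp only [Matrix.mul_assoc], hA.2, hB.2]⟩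

theorem Spset.inv_mem {A : Matrix (Fin (2 * n)) (Fin (2 * n)) ℂ} (hA : A ∈ Spset n) :
    A⁻¹ ∈ Spset n := by
  have hA' : A * A⁻¹ = 1 := mul_nonsing_inv A ((isUnit_iff_isUnit_det A).mp hA.1)
  refine mem_Spset_of_transpose_mul_mul ?_
  calc (A⁻¹)ᵀ * Jstd n * A⁻¹ = (A⁻¹)ᵀ * (Aᵀ * Jstd n * A) * A⁻¹ := by rw [hA.2]
    _ = (A * A⁻¹)ᵀ * Jstd n * (A * A⁻¹) := by simp only [transpose_mul, Matrix.mul_assoc]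
    _ = Jstd n := by rw [hA', transpose_one, Matrix.one_mul, Matrix.mul_one]

noncomputable def symplecticForm (n : ℕ) : LinearMap.BilinForm ℂ (Fin (2 * n) → ℂ) :=
  toLinearMap₂' ℂ (Jstd n)

theorem symplecticForm_apply (x y : Fin (2 * n) → ℂ) :
    symplecticForm n x y = x ⬝ᵥ Jstd n *ᵥ y :=
  toLinearMap₂'_apply' _ _ _

theorem symplecticForm_isAlt : (symplecticForm n).IsAlt := by
  intro x
  have h : x ⬝ᵥ Jstd n *ᵥ x = -(x ⬝ᵥ Jstd n *ᵥ x) := by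
    conv_lhs => rw [dotProduct_mulVec, ← mulVec_transpose, Jstd_transpose, neg_mulVec,
      neg_dotProduct, dotProduct_comm]
  rw [symplecticForm_apply]
  linear_combination h / 2

theorem exists_symplecticForm_ne_zero {x : Fin (2 * n) → ℂ} (hx : x ≠ 0) :
    ∃ y, symplecticForm n x y ≠ 0 := by
  by_contra! h
  exact hx ((separatingLeft_toLinearMap₂'_iff.mpr
    (separatingLeft_iff_det_ne_zero.mpr det_Jstd_ne_zero)) x h)

theorem symplecticForm_mulVec_mulVec {A : Matrix (Fin (2 * n)) (Fin (2 * n)) ℂ}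
    (hA : A ∈ Spset n) (x y : Fin (2 * n) → ℂ) :
    symplecticForm n (A *ᵥ x) (A *ᵥ y) = symplecticForm n x y := by
  rw [symplecticForm_apply, symplecticForm_apply, mulVec_mulVec, dotProduct_mulVec,
    ← vecMul_transpose, vecMul_vecMul, ← Matrix.mul_assoc, hA.2, ← dotProduct_mulVec]

end Symplectic

section Diagonalization

variable {n : ℕ}

theorem diagonal_mem_Spset_iff {v : Fin (2 * n) → ℂ} :
    diagonal v ∈ Spset n ↔
      ∀ k, v (finSumFinEquivTwoMul n (.inl k)) * v (finSumFinEquivTwoMul n (.inr k)) = 1 := by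
  constructor
  · intro h k
    have := congrFun₂ h.2 (finSumFinEquivTwoMul n (.inl k)) (finSumFinEquivTwoMul n (.inr k))
    simp only [diagonal_transpose, mul_diagonal, diagonal_mul, Jstd_apply,
      Equiv.symm_apply_apply] at this
    simp only [J, fromBlocks_apply₁₂, Matrix.neg_apply, one_apply_eq] at this
    linear_combination -this
  · intro h
    refine mem_Spset_of_transpose_mul_mul (ext fun a b => ?_)
    obtain ⟨u, rfl⟩ := (finSumFinEquivTwoMul n).surjective a
    obtain ⟨w, rfl⟩ := (finSumFinEquivTwoMul n).surjective b
    simp only [diagonal_transpose, mul_diagonal, diagonal_mul, Jstd_apply,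
      Equiv.symm_apply_apply]
    rcases u with k | k <;> rcases w with l | l <;> simp only [J, fromBlocks_apply₁₁,
      fromBlocks_apply₁₂, fromBlocks_apply₂₁, fromBlocks_apply₂₂, Matrix.zero_apply,
      Matrix.neg_apply, Matrix.one_apply, mul_zero, zero_mul]
    · split_ifs with hkl
      · subst hkl; linear_combination -h k
      · simp
    · split_ifs with hkl
      · subst hkl; linear_combination h k
      · simp

theorem mem_Spset_of_forall_symplecticForm_eq {P : Matrix (Fin (2 * n)) (Fin (2 * n)) ℂ}
    (h : ∀ a b, symplecticForm n (Pᵀ a) (Pᵀ b) = Jstd n a b) : P ∈ Spset n :=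
  mem_Spset_of_transpose_mul_mul (ext fun a b => by
    rw [mul_mul_apply, ← symplecticForm_apply]
    exact h a b)

theorem mul_eq_mul_diagonal_of_forall_mulVec_eq {m R : Type*} [CommSemiring R] [Fintype m]
    [DecidableEq m] {A P : Matrix m m R} {d : m → R} (h : ∀ k, A *ᵥ Pᵀ k = d k • Pᵀ k) :
    A * P = P * diagonal d := by
  ext i k
  rw [mul_diagonal]
  exact (congrFun (h k) i).trans (mul_comm _ _)

theorem isOrthoOffPairs_iInf_eigenspace {m : ℕ} {F : Fin m → Matrix (Fin (2 * n)) (Fin (2 * n)) ℂ}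
    (hF : ∀ i, F i ∈ Spset n) :
    (symplecticForm n).IsOrthoOffPairs
      (fun χ : Fin m → ℂ => ⨅ i, Module.End.eigenspace (F i).mulVecLin (χ i)) (·⁻¹) := by
  intro χ ψ hψ x hx y hy
  obtain ⟨i, hi⟩ := Function.ne_iff.mp hψ
  have hx' : F i *ᵥ x = χ i • x := Module.End.mem_eigenspace_iff.mp ((Submodule.mem_iInf _).mp hx i)
  have hy' : F i *ᵥ y = ψ i • y := Module.End.mem_eigenspace_iff.mp ((Submodule.mem_iInf _).mp hy i)
  have h := symplecticForm_mulVec_mulVec (hF i) x y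
  rw [hx', hy', LinearMap.map_smul₂, map_smul, smul_eq_mul, smul_eq_mul] at h
  have hne : χ i * ψ i - 1 ≠ 0 := sub_ne_zero.mpr fun h1 => hi (eq_inv_of_mul_eq_one_right h1)
  exact (mul_eq_zero.mp (by linear_combination h)).resolve_left hne

theorem exists_mem_Spset_mul_eq_mul_diagonal {m : ℕ}
    {F : Fin m → Matrix (Fin (2 * n)) (Fin (2 * n)) ℂ} (hF : F ∈ ssTuples m (Spset n)) :
    ∃ P ∈ Spset n, ∃ v : Fin m → Fin (2 * n) → ℂ, ∀ i, F i * P = P * diagonal (v i) := by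
  obtain ⟨⟨hFG, hFcomm⟩, hFss⟩ := hF
  have hVtop : ⨆ χ : Fin m → ℂ, ⨅ i, Module.End.eigenspace (F i).mulVecLin (χ i) = ⊤ :=
    Module.End.iSup_iInf_eigenspace_eq_top_of_commute _
      (fun i j _ => (mulVecLin_mul _ _).symm.trans
        ((congrArg mulVecLin (hFcomm i j)).trans (mulVecLin_mul _ _)))
      fun i => (hFss i).iSup_eigenspace_eq_top
  obtain ⟨r, e, f, hsys, he, hf, hspan⟩ :=
    (isOrthoOffPairs_iInf_eigenspace hFG).exists_isSymplecticSystem symplecticForm_isAlt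
      inv_involutive ⊤ (by simp [hVtop]) fun x _ hx =>
        (exists_symplecticForm_ne_zero hx).imp fun y hy => ⟨trivial, hy⟩
  obtain rfl : n = r := by
    have := hsys.finrank_eq symplecticForm_isAlt hspan
    rw [Module.finrank_fin_fun] at this
    omega
  choose χe he using he
  choose χf hf using hf
  set c : Fin (2 * n) → Fin (2 * n) → ℂ := fun k => Sum.elim f e ((finSumFinEquivTwoMul n).symm k)
  refine ⟨(of c)ᵀ,
    mem_Spset_of_forall_symplecticForm_eq fun a b => hsys.apply_sumElim symplecticForm_isAlt _ _,
    fun i k => Sum.elim χf χe ((finSumFinEquivTwoMul n).symm k) i,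
    fun i => mul_eq_mul_diagonal_of_forall_mulVec_eq fun k => ?_⟩
  show F i *ᵥ c k = _ • c k
  obtain ⟨u, rfl⟩ := (finSumFinEquivTwoMul n).surjective k
  simp only [c, Equiv.symm_apply_apply]
  rcases u with l | l
  · exact Module.End.mem_eigenspace_iff.mp ((Submodule.mem_iInf _).mp (hf l).2 i)
  · exact Module.End.mem_eigenspace_iff.mp ((Submodule.mem_iInf _).mp (he l).2 i)

end Diagonalization

section Torus

variable {n m : ℕ}

noncomputable def torusExp (n : ℕ) (μ : Fin n → ℂ) : Fin (2 * n) → ℂ :=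
  fun a => Complex.exp (Sum.elim μ (-μ) ((finSumFinEquivTwoMul n).symm a))

theorem continuous_torusExp : Continuous (torusExp n) :=
  continuous_pi fun a => Complex.continuous_exp.comp <| by
    rcases (finSumFinEquivTwoMul n).symm a with k | k
    exacts [continuous_apply k, (continuous_apply k).neg]

theorem diagonal_torusExp_mem_Spset (μ : Fin n → ℂ) : diagonal (torusExp n μ) ∈ Spset n :=
  diagonal_mem_Spset_iff.mpr fun k => by
    simp only [torusExp, Equiv.symm_apply_apply, Sum.elim_inl, Sum.elim_inr, Pi.neg_apply,
      ← Complex.exp_add, add_neg_cancel, Complex.exp_zero]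

theorem exists_torusExp_eq {v : Fin (2 * n) → ℂ} (hv : diagonal v ∈ Spset n) :
    ∃ μ, torusExp n μ = v := by
  have h := diagonal_mem_Spset_iff.mp hv
  refine ⟨fun k => Complex.log (v (finSumFinEquivTwoMul n (.inl k))), funext fun a => ?_⟩
  obtain ⟨u, rfl⟩ := (finSumFinEquivTwoMul n).surjective a
  rcases u with k | k <;> simp only [torusExp, Equiv.symm_apply_apply, Sum.elim_inl,
    Sum.elim_inr, Pi.neg_apply, Complex.exp_neg, Complex.exp_log (left_ne_zero_of_mul_eq_one (h k))]
  exact inv_eq_of_mul_eq_one_right (h k)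

noncomputable def torusTuple (n m : ℕ) (μ : Fin m → Fin n → ℂ) : ssTuples m (Spset n) :=
  ⟨fun i => diagonal (torusExp n (μ i)),
    ⟨fun i => diagonal_torusExp_mem_Spset _, fun i j => by simp [diagonal_mul_diagonal, mul_comm]⟩,
    fun i => isSemisimpleMat_diagonal _⟩

theorem continuous_torusTuple : Continuous (torusTuple n m) :=
  (continuous_pi fun i =>
    (continuous_torusExp.comp (continuous_apply i)).matrix_diagonal).subtype_mk _

theorem exists_conjRel_torusTuple (F : ssTuples m (Spset n)) :
    ∃ μ, conjRel (Spset n) (ssTuples m (Spset n)) F (torusTuple n m μ) := by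
  obtain ⟨P, hP, v, hv⟩ := exists_mem_Spset_mul_eq_mul_diagonal F.2
  have hPdet := (isUnit_iff_isUnit_det P).mp hP.1
  have hconj i : P⁻¹ * F.1 i * P = diagonal (v i) := by
    rw [Matrix.mul_assoc, hv, ← Matrix.mul_assoc, nonsing_inv_mul P hPdet, Matrix.one_mul]
  choose μ hμ using fun i => exists_torusExp_eq
    (hconj i ▸ Spset.mul_mem (Spset.mul_mem (Spset.inv_mem hP) (F.2.1.1 i)) hP)
  exact ⟨μ, P⁻¹, P, Spset.inv_mem hP, hP, nonsing_inv_mul P hPdet, mul_nonsing_inv P hPdet,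
    fun i => by rw [hconj, ← hμ]; rfl⟩

end Torus

theorem symplectic_char_variety_pathConnected_general (n d : ℕ) :
    PathConnectedSpace (RepSpace (Spset n) (ssTuples (2*d) (Spset n))) := by
  refine Function.Surjective.pathConnectedSpace (f := fun μ => Quot.mk _ (torusTuple n (2 * d) μ))
    (Quot.ind fun F => ?_) (continuous_quot_mk.comp continuous_torusTuple)
  obtain ⟨μ, hμ⟩ := exists_conjRel_torusTuple F
  exact ⟨μ, (Quot.sound hμ).symm⟩

/-- Corollary 4.8 of Biswas–Florentino for `G = Sp(2n,ℂ)`: the space of conjugation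
classes of `2d`-tuples of commuting semisimple elements of `Sp(2n,ℂ)` is path
connected. -/
theorem symplectic_char_variety_pathConnected (n d : ℕ) (hn : 1 ≤ n) (hd : 1 ≤ d) :
    PathConnectedSpace (RepSpace (Spset n) (ssTuples (2*d) (Spset n))) :=
  symplectic_char_variety_pathConnected_general n d
end

section
/- For all integers n ≥ 1 and d ≥ 1, the space Hom(ℤ^{2d}, GL(n,ℂ))⁺/GL(n,ℂ) of conjugation classes of 2d-tuples of commuting semisimple elements of GL(n,ℂ) is path connected. -/
open Matrix

/-!
A semisimple matrix `A = u · diag(e) · u⁻¹` in `GL(n,ℂ)` is joined to `1` by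
`t ↦ u · diag(e^(1-t)) · u⁻¹`, all of whose points are semisimple and invertible. Each point is
`u · diag(φ ∘ e) · u⁻¹` for a function `φ` of the eigenvalues, hence a polynomial in `A`
(Lagrange interpolation on the spectrum). So deforming every entry of a commuting tuple this way
keeps the entries commuting, which makes `Hom(ℤ^m, GL(n,ℂ))⁺` path connected, and so is its
quotient by conjugation.
-/

open Polynomial

theorem AlgHom.apply_comp_mem_adjoin_singleton {K ι A : Type*} [Field K] [Fintype ι]
    [Semiring A] [Algebra K A] (ψ : (ι → K) →ₐ[K] A) (e : ι → K) (φ : K → K) :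
    ψ (φ ∘ e) ∈ Algebra.adjoin K {ψ e} := by
  classical
  -- `φ ∘ e` is a polynomial in `e`: interpolate `φ` on the finitely many values of `e`.
  have hinterp : aeval e (Lagrange.interpolate (Finset.univ.image e) id φ) = φ ∘ e := by
    funext k
    rw [aeval_pi_apply₂, coe_aeval_eq_eval]
    exact Lagrange.eval_interpolate_at_node φ (Set.injOn_id _)
      (Finset.mem_image_of_mem e (Finset.mem_univ k))
  rw [← hinterp, ← aeval_algHom_apply]
  exact aeval_mem_adjoin_singleton K (ψ e)

section ConjDiagonal

variable {n K : Type*} [Fintype n] [DecidableEq n] [Field K]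

def conjDiagonal (u : (Matrix n n K)ˣ) : (n → K) →ₐ[K] Matrix n n K :=
  (MulSemiringAction.toAlgEquiv K (Matrix n n K) (ConjAct.toConjAct u)).toAlgHom.comp
    (diagonalAlgHom K)

theorem conjDiagonal_apply (u : (Matrix n n K)ˣ) (e : n → K) :
    conjDiagonal u e = (u : Matrix n n K) * diagonal e * (u⁻¹ : (Matrix n n K)ˣ) := rfl

theorem isUnit_conjDiagonal_iff {u : (Matrix n n K)ˣ} {e : n → K} :
    IsUnit (conjDiagonal u e) ↔ ∀ k, e k ≠ 0 := by
  rw [conjDiagonal_apply, Units.isUnit_mul_units, Units.isUnit_units_mul, isUnit_diagonal,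
    Pi.isUnit_iff]
  simp only [isUnit_iff_ne_zero]

theorem continuous_conjDiagonal [TopologicalSpace K] [IsTopologicalRing K] (u : (Matrix n n K)ˣ) :
    Continuous (conjDiagonal u) :=
  (continuous_const.matrix_mul continuous_id.matrix_diagonal).matrix_mul continuous_const

end ConjDiagonal

theorem isSemisimpleMat_iff_exists_conjDiagonal {n : ℕ} {A : Matrix (Fin n) (Fin n) ℂ} :
    IsSemisimpleMat A ↔ ∃ u e, conjDiagonal u e = A := by
  constructor
  · rintro ⟨P, Q, hPQ, hQP, hdiag⟩
    refine ⟨⟨P, Q, hPQ, hQP⟩, (Q * A * P).diag, ?_⟩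
    rw [conjDiagonal_apply, hdiag.diagonal_diag]
    simp only [Units.inv_mk, ← mul_assoc, hPQ, one_mul]
    rw [mul_assoc, hPQ, mul_one]
  · rintro ⟨u, e, rfl⟩
    refine ⟨u, ↑u⁻¹, u.mul_inv, u.inv_mul, ?_⟩
    rw [conjDiagonal_apply]
    simp only [← mul_assoc, Units.inv_mul, one_mul]
    rw [mul_assoc, Units.inv_mul, mul_one]
    exact isDiag_diagonal e

theorem continuous_cpow_one_sub {z : ℂ} (hz : z ≠ 0) :
    Continuous fun t : unitInterval => z ^ (1 - (t : ℂ)) :=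
  (continuous_const.sub (Complex.continuous_ofReal.comp continuous_subtype_val)).const_cpow
    (Or.inl hz)

theorem joinedIn_ssTuples_one {m n : ℕ} {f : Fin m → Matrix (Fin n) (Fin n) ℂ}
    (hf : f ∈ ssTuples m (GLset n)) : JoinedIn (ssTuples m (GLset n)) f 1 := by
  obtain ⟨⟨hGL, hcomm⟩, hss⟩ := hf
  choose u e he using fun i => isSemisimpleMat_iff_exists_conjDiagonal.mp (hss i)
  have he0 : ∀ i k, e i k ≠ 0 := fun i => isUnit_conjDiagonal_iff.mp ((he i).symm ▸ hGL i)
  let γ : Path f 1 :=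
    { toFun t i := conjDiagonal (u i) fun k => e i k ^ (1 - (t : ℂ))
      continuous_toFun := continuous_pi fun i => (continuous_conjDiagonal (u i)).comp
        (continuous_pi fun k => continuous_cpow_one_sub (he0 i k))
      source' := by funext i; simp [he]
      target' := by funext i; simp [← Pi.one_def] }
  -- Each `γ t i` is a polynomial in `f i`, so commutation of the `f i` survives along `γ`.
  have hadjoin : ∀ t i, γ t i ∈ Algebra.adjoin ℂ {f i} := fun t i =>
    he i ▸ (conjDiagonal (u i)).apply_comp_mem_adjoin_singleton (e i) (· ^ (1 - (t : ℂ)))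
  refine ⟨γ, fun t => ⟨⟨fun i => ?_, fun i j => ?_⟩, fun i => ?_⟩⟩
  · exact isUnit_conjDiagonal_iff.mpr fun k => Complex.cpow_ne_zero_iff.mpr (Or.inl (he0 i k))
  · have hfγ : Commute (f i) (γ t j) :=
      Algebra.commute_of_mem_adjoin_singleton_of_commute (hadjoin t j) (hcomm i j)
    exact (Algebra.commute_of_mem_adjoin_singleton_of_commute (hadjoin t i) hfγ.symm).symm
  · exact isSemisimpleMat_iff_exists_conjDiagonal.mpr ⟨u i, _, rfl⟩

theorem isPathConnected_ssTuples (m n : ℕ) : IsPathConnected (ssTuples m (GLset n)) := by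
  have hone : (1 : Fin m → Matrix (Fin n) (Fin n) ℂ) ∈ ssTuples m (GLset n) :=
    ⟨⟨fun _ => isUnit_one, fun _ _ => rfl⟩,
      fun _ => isSemisimpleMat_iff_exists_conjDiagonal.mpr ⟨1, 1, map_one _⟩⟩
  exact ⟨1, hone, fun _ hf => (joinedIn_ssTuples_one hf).symm⟩

theorem generalLinear_char_variety_pathConnected_general (n d : ℕ) :
    PathConnectedSpace (RepSpace (GLset n) (ssTuples (2*d) (GLset n))) :=
  haveI := isPathConnected_iff_pathConnectedSpace.mp (isPathConnected_ssTuples (2 * d) n)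
  Quot.mk_surjective.pathConnectedSpace continuous_quot_mk

/-- For `G = GL(n,ℂ)`: the space of conjugation classes of `2d`-tuples of commuting
semisimple elements of `GL(n,ℂ)` is path connected. -/
theorem generalLinear_char_variety_pathConnected (n d : ℕ) (hn : 1 ≤ n) (hd : 1 ≤ d) :
    PathConnectedSpace (RepSpace (GLset n) (ssTuples (2*d) (GLset n))) :=
  generalLinear_char_variety_pathConnected_general n d
end
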